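/- arXiv:2601.03031 — 3 statements merged into one kernel-verified Lean document; each statement's English description precedes it below -/
import Mathlib

section
/- Let F be a field and ℓ ≥ 1. Define the fold operation: for b : Fin (2*m) → F and nonzero x ∈ F, fold x b : Fin m → F is given by (fold x b) i = b_L i + x⁻¹ * b_R i. Let x_1, …, x_ℓ ∈ F be nonzero and let u_i : Fin (2^ℓ) → F be the i-th standard unit vector, where i has binary expansion i = ∑_{k<ℓ} i_k 2^k. Then applying fold x_1, then fold x_2, …, then fold x_ℓ to u_i yields the vector of length 1 whose single entry equals ∏_{k=1}^{ℓ} (x_k⁻¹)^{i_{ℓ-k}}. -/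
/-! Folding sends a scaled unit vector `c • u_i` of length `2m` to `(c * x⁻¹ ^ (i / m)) • u_(i % m)`:
the top bit of `i` is consumed as a factor `x⁻¹` and the remaining bits index the surviving entry.
Induction on `ℓ` then peels off the bits of `i` from the most significant one down. -/

/-- One folding round of the scalar vector: `(fold m x b) i = b_L i + x⁻¹ * b_R i`. -/
def fold {F : Type*} [Field F] (m : ℕ) (x : F) (b : Fin (2 * m) → F) : Fin m → F :=
  fun i => b ⟨i.val, by have := i.isLt; omega⟩ + x⁻¹ * b ⟨m + i.val, by have := i.isLt; omega⟩

/-- Iterated folding with challenges `x 0, x 1, …` applied in order. -/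
def foldIter {F : Type*} [Field F] : (ℓ : ℕ) → (Fin ℓ → F) → (Fin (2 ^ ℓ) → F) → (Fin 1 → F)
  | 0, _, b => b
  | (ℓ + 1), x, b =>
      foldIter ℓ (fun k => x k.succ)
        (fold (2 ^ ℓ) (x 0) (fun i => b (Fin.cast (show 2 * 2 ^ ℓ = 2 ^ (ℓ + 1) by ring) i)))

theorem Nat.mod_two_pow_div_two_pow_mod_two {n d : ℕ} (hd : d < n) (i : ℕ) :
    i % 2 ^ n / 2 ^ d % 2 = i / 2 ^ d % 2 := by
  obtain ⟨e, rfl⟩ := Nat.exists_eq_add_of_le hd.le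
  rw [pow_add, Nat.mod_mul_right_div_self, Nat.mod_mod_of_dvd _ (dvd_pow_self 2 (by omega))]

section

variable {F : Type*} [Field F]

theorem fold_single {m : ℕ} (y c : F) (i : Fin (2 * m)) :
    fold m y (Pi.single i c) =
      Pi.single ⟨i % m, Nat.mod_lt _ (by have := i.isLt; omega)⟩ (c * y⁻¹ ^ (i / m)) := by
  funext a
  have ha := a.isLt
  have hi := i.isLt
  simp only [fold, Pi.single_apply, Fin.ext_iff]
  rcases Nat.lt_or_ge i.val m with hlt | hge
  · simp [Nat.mod_eq_of_lt hlt, Nat.div_eq_of_lt hlt, show m + a.val ≠ i by omega]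
  · have hdiv : i / m = 1 := Nat.div_eq_of_lt_le (by omega) (by omega)
    have hmod : i % m = i - m := by rw [Nat.mod_eq_sub_mod hge, Nat.mod_eq_of_lt (by omega)]
    simp only [hdiv, hmod, pow_one, show a.val ≠ i by omega,
      show m + a.val = i ↔ a.val = i - m by omega, ↓reduceIte, zero_add]
    split_ifs <;> ring

theorem foldIter_single (ℓ : ℕ) (x : Fin ℓ → F) (c : F) (i : Fin (2 ^ ℓ)) :
    foldIter ℓ x (Pi.single i c) =
      fun _ => c * ∏ k : Fin ℓ, (x k)⁻¹ ^ (i.val / 2 ^ (ℓ - 1 - k.val) % 2) := by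
  induction ℓ generalizing c with
  | zero => funext a; simp [foldIter, Subsingleton.elim a i]
  | succ ℓ ih =>
    have hcast :
        (fun j => (Pi.single i c : Fin (2 ^ (ℓ + 1)) → F) (Fin.cast (pow_succ' 2 ℓ).symm j)) =
          Pi.single (Fin.cast (pow_succ' 2 ℓ) i) c :=
      Pi.single_comp_equiv (finCongr (pow_succ' 2 ℓ).symm) i c
    have hi : i.val / 2 ^ ℓ < 2 := Nat.div_lt_of_lt_mul (by simpa [pow_succ] using i.isLt)
    simp only [foldIter, hcast, fold_single, ih, Fin.prod_univ_succ]
    funext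
    simp only [Fin.val_cast, Fin.val_zero, Fin.val_succ, Nat.add_sub_cancel, Nat.sub_zero,
      Nat.mod_eq_of_lt hi, mul_assoc]
    congr 2
    refine Finset.prod_congr rfl fun k _ => ?_
    rw [Nat.mod_two_pow_div_two_pow_mod_two (by omega), show ℓ - 1 - k = ℓ - (k + 1) by omega]

end

theorem stmt4_general {F : Type*} [Field F] (ℓ : ℕ) (x : Fin ℓ → F) (i : Fin (2 ^ ℓ)) :
    foldIter ℓ x (fun a => if a = i then (1 : F) else 0) =
      fun _ => ∏ k : Fin ℓ, ((x k)⁻¹) ^ (i.val / 2 ^ (ℓ - 1 - k.val) % 2) := by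
  have hunit : (fun a => if a = i then (1 : F) else 0) = Pi.single i 1 :=
    funext fun a => (Pi.single_apply i 1 a).symm
  rw [hunit, foldIter_single]
  simp only [one_mul]

theorem stmt4 {F : Type*} [Field F] (ℓ : ℕ) (hℓ : 1 ≤ ℓ) (x : Fin ℓ → F)
    (hx : ∀ k, x k ≠ 0) (i : Fin (2 ^ ℓ)) :
    foldIter ℓ x (fun a => if a = i then (1 : F) else 0) =
      fun _ => ∏ k : Fin ℓ, ((x k)⁻¹) ^ (i.val / 2 ^ (ℓ - 1 - k.val) % 2) :=
  stmt4_general ℓ x i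
end

section
/- Let F be a field and x_1,…,x_ℓ ∈ F nonzero, and let fold be as above. For b = ∑_{i∈I} r_i • u_i with I ⊆ Fin (2^ℓ) and r : I → F, the result of applying fold x_1, …, fold x_ℓ in sequence is the length-1 vector with entry ∑_{i∈I} r_i * ∏_{k=1}^{ℓ} (x_k⁻¹)^{i_{ℓ-k}}, where (i_{ℓ-1},…,i_0) are the bits of i. -/
section
variable {F : Type*} [Field F]

def foldWeight (ℓ : ℕ) (x : Fin ℓ → F) (j : ℕ) : F :=
  ∏ k : Fin ℓ, (x k)⁻¹ ^ (j / 2 ^ (ℓ - 1 - k.val) % 2)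

theorem two_pow_add_div_two_pow_mod_two {ℓ d : ℕ} (hd : d < ℓ) (j : ℕ) :
    (2 ^ ℓ + j) / 2 ^ d % 2 = j / 2 ^ d % 2 := by
  obtain ⟨e, rfl⟩ := Nat.exists_eq_add_of_lt hd
  rw [show 2 ^ (d + e + 1) = 2 ^ d * (2 * 2 ^ e) by ring,
    Nat.add_comm, Nat.add_mul_div_left _ _ (by positivity), Nat.add_mul_mod_self_left]

theorem foldWeight_succ (ℓ : ℕ) (x : Fin (ℓ + 1) → F) (j : ℕ) :
    foldWeight (ℓ + 1) x j = (x 0)⁻¹ ^ (j / 2 ^ ℓ % 2) * foldWeight ℓ (fun k => x k.succ) j := by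
  rw [foldWeight, Fin.prod_univ_succ]
  congr 3 with k
  simp only [Fin.val_succ]
  congr 4
  omega

theorem foldWeight_two_pow_add (ℓ : ℕ) (x : Fin ℓ → F) (j : ℕ) :
    foldWeight ℓ x (2 ^ ℓ + j) = foldWeight ℓ x j := by
  refine Finset.prod_congr rfl fun k _ => ?_
  rw [two_pow_add_div_two_pow_mod_two (by omega)]

theorem foldIter_apply : ∀ (ℓ : ℕ) (x : Fin ℓ → F) (b : Fin (2 ^ ℓ) → F) (t : Fin 1),
    foldIter ℓ x b t = ∑ j, b j * foldWeight ℓ x j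
  | 0, x, b, t => by
    simp [foldIter, foldWeight, Subsingleton.elim t 0]
  | ℓ + 1, x, b, t => by
    have hsplit : 2 ^ ℓ + 2 ^ ℓ = 2 ^ (ℓ + 1) := by ring
    rw [foldIter, foldIter_apply, ← Fin.sum_congr' _ hsplit, Fin.sum_univ_add,
      ← Finset.sum_add_distrib]
    refine Finset.sum_congr rfl fun i _ => ?_
    have hlow : (i : ℕ) / 2 ^ ℓ = 0 := Nat.div_eq_of_lt i.isLt
    have hhigh : (2 ^ ℓ + i : ℕ) / 2 ^ ℓ = 1 := by
      rw [Nat.add_div_left _ (by positivity), hlow]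
    show (b (Fin.cast hsplit (Fin.castAdd _ i)) + (x 0)⁻¹ * b (Fin.cast hsplit (Fin.natAdd _ i))) *
        foldWeight ℓ (fun k => x k.succ) i = _
    simp only [Fin.val_cast, Fin.val_castAdd, Fin.val_natAdd, foldWeight_succ,
      foldWeight_two_pow_add, hlow, hhigh, Nat.zero_mod, Nat.one_mod, pow_zero, pow_one]
    ring

end

theorem stmt6_general {F : Type*} [Field F] (ℓ : ℕ) (x : Fin ℓ → F)
    (I : Finset (Fin (2 ^ ℓ))) (r : Fin (2 ^ ℓ) → F) :
    foldIter ℓ x (∑ i ∈ I, r i • fun a => if a = i then (1 : F) else 0) =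
      fun _ => ∑ i ∈ I, r i * ∏ k : Fin ℓ, ((x k)⁻¹) ^ (i.val / 2 ^ (ℓ - 1 - k.val) % 2) := by
  funext t
  simp [foldIter_apply, foldWeight]

theorem stmt6 {F : Type*} [Field F] (ℓ : ℕ) (x : Fin ℓ → F) (hx : ∀ k, x k ≠ 0)
    (I : Finset (Fin (2 ^ ℓ))) (r : Fin (2 ^ ℓ) → F) :
    foldIter ℓ x (∑ i ∈ I, r i • fun a => if a = i then (1 : F) else 0) =
      fun _ => ∑ i ∈ I, r i * ∏ k : Fin ℓ, ((x k)⁻¹) ^ (i.val / 2 ^ (ℓ - 1 - k.val) % 2) :=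
  stmt6_general ℓ x I r
end

section
/- Let F be a field, n = 2^ℓ, and let x_1,…,x_ℓ ∈ F be nonzero. Define iterated folding on vectors v : Fin (2^{ℓ}) → F by v_0 = v and v_j i = v_{j-1} i + x_j⁻¹ * v_{j-1}(i + 2^{ℓ-j}) for i < 2^{ℓ-j}. Then for all j ≤ ℓ and m < 2^{ℓ-j}: v_j m = ∑_{t < 2^j} v(m + t * 2^{ℓ-j}) * ∏_{a=1}^{j} (x_a⁻¹)^{t_{j-a}}, where (t_{j-1},…,t_0) are the bits of t. -/
/-- Iterated folding on (ℕ-indexed) vectors: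
`v_0 = v` and `v_{j+1} i = v_j i + (x (j+1))⁻¹ * v_j (i + 2^(ℓ-(j+1)))`. -/
def itFold {F : Type*} [Field F] (ℓ : ℕ) (x : ℕ → F) : ℕ → (ℕ → F) → (ℕ → F)
  | 0, v => v
  | (j + 1), v => fun i =>
      itFold ℓ x j v i + (x (j + 1))⁻¹ * itFold ℓ x j v (i + 2 ^ (ℓ - (j + 1)))

private lemma sum_range_double {M : Type*} [AddCommMonoid M] (N : ℕ) (f : ℕ → M) :
    ∑ t ∈ Finset.range (2 * N), f t = ∑ s ∈ Finset.range N, (f (2 * s) + f (2 * s + 1)) := by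
  induction N with
  | zero => simp
  | succ n ih =>
    rw [Nat.mul_succ, show 2*n+2 = (2*n+1)+1 from rfl, Finset.sum_range_succ,
      Finset.sum_range_succ, ih, Finset.sum_range_succ, add_assoc]

private lemma div_bit (s b k : ℕ) (hb : b < 2) :
    (2 * s + b) / 2 ^ (k + 1) = s / 2 ^ k := by
  rw [pow_succ, mul_comm (2^k) 2, ← Nat.div_div_eq_div_mul,
    Nat.mul_add_div (by norm_num), Nat.div_eq_of_lt hb, add_zero]

theorem stmt13 {F : Type*} [Field F] (ℓ : ℕ) (x : ℕ → F)
    (hx : ∀ a, 1 ≤ a → a ≤ ℓ → x a ≠ 0) (v : ℕ → F) (j : ℕ) (hj : j ≤ ℓ)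
    (m : ℕ) (hm : m < 2 ^ (ℓ - j)) :
    itFold ℓ x j v m =
      ∑ t : Fin (2 ^ j), v (m + t.val * 2 ^ (ℓ - j)) *
        ∏ a : Fin j, (x (a.val + 1))⁻¹ ^ (t.val / 2 ^ (j - 1 - a.val) % 2) := by
  induction j generalizing m with
  | zero => simp [itFold]
  | succ j ih =>
    have hjl : j < ℓ := by omega
    have h2 : (2:ℕ) ^ (ℓ - j) = 2 * 2 ^ (ℓ - (j+1)) := by
      rw [show ℓ - j = (ℓ - (j+1)) + 1 by omega, pow_succ]; ring
    have hm1 : m < 2 ^ (ℓ - j) := by omega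
    have hm2 : m + 2 ^ (ℓ - (j+1)) < 2 ^ (ℓ - j) := by omega
    simp only [itFold]
    rw [ih (by omega) m hm1, ih (by omega) _ hm2]
    rw [Fin.sum_univ_eq_sum_range
        (fun t => v (m + t * 2 ^ (ℓ - j)) * ∏ a : Fin j, (x (a.val + 1))⁻¹ ^ (t / 2 ^ (j - 1 - a.val) % 2)),
      Fin.sum_univ_eq_sum_range
        (fun t => v (m + 2 ^ (ℓ - (j+1)) + t * 2 ^ (ℓ - j)) * ∏ a : Fin j, (x (a.val + 1))⁻¹ ^ (t / 2 ^ (j - 1 - a.val) % 2)),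
      Fin.sum_univ_eq_sum_range
        (fun t => v (m + t * 2 ^ (ℓ - (j+1))) * ∏ a : Fin (j+1), (x (a.val + 1))⁻¹ ^ (t / 2 ^ (j + 1 - 1 - a.val) % 2)),
      Finset.mul_sum, ← Finset.sum_add_distrib, show (2:ℕ)^(j+1) = 2 * 2^j by ring,
      sum_range_double]
    refine Finset.sum_congr rfl fun s hs => ?_
    have hQ : ∀ t : ℕ,
        (∏ a : Fin (j+1), (x (a.val + 1))⁻¹ ^ (t / 2 ^ (j + 1 - 1 - a.val) % 2)) =
        (∏ a : Fin j, (x (a.val + 1))⁻¹ ^ (t / 2 ^ (j - a.val) % 2)) *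
          (x (j + 1))⁻¹ ^ (t % 2) := by
      intro t
      rw [Fin.prod_univ_castSucc]
      simp [Fin.last, Fin.castSucc]
    have hdiv : ∀ b : ℕ, b < 2 → ∀ a : Fin j,
        (2 * s + b) / 2 ^ (j - a.val) % 2 = s / 2 ^ (j - 1 - a.val) % 2 := by
      intro b hb a
      rw [show j - a.val = (j - 1 - a.val) + 1 by omega, div_bit s b _ hb]
    have hP0 : (∏ a : Fin j, (x (a.val + 1))⁻¹ ^ ((2 * s) / 2 ^ (j - a.val) % 2)) =
        ∏ a : Fin j, (x (a.val + 1))⁻¹ ^ (s / 2 ^ (j - 1 - a.val) % 2) := by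
      refine Finset.prod_congr rfl fun a _ => ?_
      rw [show 2 * s = 2 * s + 0 from rfl, hdiv 0 (by norm_num) a]
    have hP1 : (∏ a : Fin j, (x (a.val + 1))⁻¹ ^ ((2 * s + 1) / 2 ^ (j - a.val) % 2)) =
        ∏ a : Fin j, (x (a.val + 1))⁻¹ ^ (s / 2 ^ (j - 1 - a.val) % 2) := by
      refine Finset.prod_congr rfl fun a _ => ?_
      rw [hdiv 1 (by norm_num) a]
    rw [hQ (2 * s), hQ (2 * s + 1), hP0, hP1, Nat.mul_mod_right,
      Nat.mul_add_mod]
    have hi0 : m + 2 * s * 2 ^ (ℓ - (j+1)) = m + s * 2 ^ (ℓ - j) := by rw [h2]; ring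
    have hi1 : m + (2 * s + 1) * 2 ^ (ℓ - (j+1)) = m + 2 ^ (ℓ - (j+1)) + s * 2 ^ (ℓ - j) := by
      rw [h2]; ring
    rw [hi0, hi1]
    ring
end
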